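/- In LSkT the rule IL⁻¹ is admissible: from a derivation of T[I] ⊢ C one can construct a derivation of T[-] ⊢ C. -/

import Mathlib

/-- Formulae of left skew monoidal closed logic: atoms, unit I, ⊗, ⊸. -/
inductive Fma : Type
  | atom : ℕ → Fma
  | I : Fma
  | tens : Fma → Fma → Fma
  | lolli : Fma → Fma → Fma

/-- Trees: formulae, the empty tree, and pairing. -/
inductive Tr : Type
  | fma : Fma → Tr
  | emp : Tr
  | pair : Tr → Tr → Tr

/-- Contexts: trees with a single hole. -/
inductive Ctx : Type
  | hole : Ctx
  | pairL : Ctx → Tr → Ctx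
  | pairR : Tr → Ctx → Ctx

/-- Substitution of a tree into the hole of a context. -/
def plug : Ctx → Tr → Tr
  | Ctx.hole, U => U
  | Ctx.pairL C T, U => Tr.pair (plug C U) T
  | Ctx.pairR T C, U => Tr.pair T (plug C U)

/-- Derivability in the tree sequent calculus LSkT: `TDer T A` means `T ⊢ A`. -/
inductive TDer : Tr → Fma → Prop
  | ax {A} : TDer (Tr.fma A) A
  | IL {T C} : TDer (plug T Tr.emp) C → TDer (plug T (Tr.fma Fma.I)) C
  | IR : TDer Tr.emp Fma.I
  | tensL {T A B C} : TDer (plug T (Tr.pair (Tr.fma A) (Tr.fma B))) C →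
      TDer (plug T (Tr.fma (Fma.tens A B))) C
  | tensR {T U A B} : TDer T A → TDer U B → TDer (Tr.pair T U) (Fma.tens A B)
  | lolliL {T U A B C} : TDer U A → TDer (plug T (Tr.fma B)) C →
      TDer (plug T (Tr.pair (Tr.fma (Fma.lolli A B)) U)) C
  | lolliR {T A B} : TDer (Tr.pair T (Tr.fma A)) B → TDer T (Fma.lolli A B)
  | assoc {T U₀ U₁ U₂ C} : TDer (plug T (Tr.pair U₀ (Tr.pair U₁ U₂))) C →
      TDer (plug T (Tr.pair (Tr.pair U₀ U₁) U₂)) C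
  | unitL {T U C} : TDer (plug T U) C → TDer (plug T (Tr.pair Tr.emp U)) C
  | unitR {T U C} : TDer (plug T (Tr.pair U Tr.emp)) C → TDer (plug T U) C

/-!
Erasing any occurrences of `I` from an antecedent preserves derivability, by induction on the
derivation. Every rule commutes with erasure, with two exceptions: an axiom `I ⊢ I` whose `I` is
erased becomes `IR`, and an `IL` whose principal `I` is erased becomes redundant, its premise
already being the erased conclusion. Erasing all occurrences, rather than the single one in the
hole, is what lets the induction pass through rules that rearrange the antecedent.
-/

inductive IErase : Tr → Tr → Prop
  | fma (A : Fma) : IErase (Tr.fma A) (Tr.fma A)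
  | emp : IErase Tr.emp Tr.emp
  | unit : IErase (Tr.fma Fma.I) Tr.emp
  | pair {T T' U U' : Tr} : IErase T T' → IErase U U' → IErase (Tr.pair T U) (Tr.pair T' U')

inductive IEraseCtx : Ctx → Ctx → Prop
  | hole : IEraseCtx Ctx.hole Ctx.hole
  | pairL {T T' : Ctx} {U U' : Tr} : IEraseCtx T T' → IErase U U' →
      IEraseCtx (Ctx.pairL T U) (Ctx.pairL T' U')
  | pairR {U U' : Tr} {T T' : Ctx} : IErase U U' → IEraseCtx T T' →
      IEraseCtx (Ctx.pairR U T) (Ctx.pairR U' T')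

theorem IErase.refl : ∀ T : Tr, IErase T T
  | Tr.fma A => fma A
  | Tr.emp => emp
  | Tr.pair T U => pair (refl T) (refl U)

theorem IEraseCtx.refl : ∀ T : Ctx, IEraseCtx T T
  | Ctx.hole => hole
  | Ctx.pairL T U => pairL (refl T) (IErase.refl U)
  | Ctx.pairR U T => pairR (IErase.refl U) (refl T)

theorem IEraseCtx.plug {T T' : Ctx} {U U' : Tr} (hT : IEraseCtx T T') (hU : IErase U U') :
    IErase (plug T U) (plug T' U') := by
  induction hT with
  | hole => exact hU
  | pairL _ hV ih => exact .pair ih hV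
  | pairR hV _ ih => exact .pair hV ih

theorem IErase.exists_of_plug : ∀ {T : Ctx} {U S : Tr}, IErase (plug T U) S →
    ∃ T' U', S = plug T' U' ∧ IEraseCtx T T' ∧ IErase U U'
  | Ctx.hole, _, S, h => ⟨Ctx.hole, S, rfl, IEraseCtx.hole, h⟩
  | Ctx.pairL _ _, _, _, pair hT hV => by
      obtain ⟨T', U', rfl, hT', hU⟩ := exists_of_plug hT
      exact ⟨Ctx.pairL T' _, U', rfl, IEraseCtx.pairL hT' hV, hU⟩
  | Ctx.pairR _ _, _, _, pair hV hT => by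
      obtain ⟨T', U', rfl, hT', hU⟩ := exists_of_plug hT
      exact ⟨Ctx.pairR _ T', U', rfl, IEraseCtx.pairR hV hT', hU⟩

theorem TDer.of_iErase {S S' : Tr} {C : Fma} (d : TDer S C) (h : IErase S S') : TDer S' C := by
  induction d generalizing S' with
  | ax => cases h with
    | fma => exact ax
    | unit => exact IR
  | IR => cases h; exact IR
  | IL _ ih =>
    obtain ⟨T', U', rfl, hT, hU⟩ := h.exists_of_plug
    cases hU with
    | fma => exact IL (ih (hT.plug .emp))
    | unit => exact ih (hT.plug .emp)
  | tensL _ ih =>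
    obtain ⟨T', U', rfl, hT, ⟨⟩⟩ := h.exists_of_plug
    exact tensL (ih (hT.plug (.pair (.fma _) (.fma _))))
  | tensR _ _ ih₁ ih₂ =>
    obtain _ | _ | _ | ⟨h₁, h₂⟩ := h
    exact tensR (ih₁ h₁) (ih₂ h₂)
  | lolliL _ _ ih₁ ih₂ =>
    obtain ⟨T', U', rfl, hT, _ | _ | _ | ⟨⟨⟩, hU⟩⟩ := h.exists_of_plug
    exact lolliL (ih₁ hU) (ih₂ (hT.plug (.fma _)))
  | lolliR _ ih => exact lolliR (ih (.pair h (.fma _)))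
  | assoc _ ih =>
    obtain ⟨T', U', rfl, hT, _ | _ | _ | ⟨_ | _ | _ | ⟨h₀, h₁⟩, h₂⟩⟩ := h.exists_of_plug
    exact assoc (ih (hT.plug (.pair h₀ (.pair h₁ h₂))))
  | unitL _ ih =>
    obtain ⟨T', U', rfl, hT, _ | _ | _ | ⟨⟨⟩, hU⟩⟩ := h.exists_of_plug
    exact unitL (ih (hT.plug hU))
  | unitR _ ih =>
    obtain ⟨T', U', rfl, hT, hU⟩ := h.exists_of_plug
    exact unitR (ih (hT.plug (.pair hU .emp)))

/-- Admissibility of the inverse unit-left rule IL⁻¹ in LSkT. -/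
theorem IL_inv_admissible (T : Ctx) (C : Fma)
    (f : TDer (plug T (Tr.fma Fma.I)) C) : TDer (plug T Tr.emp) C :=
  f.of_iErase ((IEraseCtx.refl T).plug .unit)
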